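/- Let A be an n×n max-plus matrix, C a column-regular m×n matrix, b a vector, d a regular vector, and suppose Δ = Tr(A) ⊕ d⁻ ⊗ C ⊗ A* ⊗ b ≤ 0. Then the set of regular solutions of the system {A ⊗ x ⊕ b ≤ x, C ⊗ x ≤ d} is exactly { A* ⊗ u : u regular, b ≤ u ≤ (d⁻ ⊗ C ⊗ A*)⁻ }. -/

import Mathlib

/-!
Because Tr(A) ≤ 0, every closed walk has nonpositive weight, so cutting a cycle out of a
walk never decreases its weight; hence Aᴺ ≤ A* for all N and A ⊗ A* ≤ A*. Consequently
A ⊗ x ≤ x forces x = A* ⊗ x, while conversely every x = A* ⊗ u satisfies A ⊗ x ≤ x and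
x ≥ u. The constraint C ⊗ x ≤ d is handled by residuation: for a column-regular M,
M ⊗ y ≤ d holds iff y ≤ (d⁻ ⊗ M)⁻, applied to M = C ⊗ A* (column-regular with C) and
C ⊗ A* ⊗ u = C ⊗ x.
-/

noncomputable section

/-- Max-plus carrier: ℝ ∪ {-∞}. Addition ⊕ is `max`, multiplication ⊗ is `+`
(with ⊥ = -∞ absorbing), zero is ⊥ and unit is `(0 : ℝ)`. -/
abbrev MP := WithBot ℝ

/-- Multiplicative conjugate: negate a finite value, send -∞ to -∞. -/
def mpInv (a : MP) : MP := a.map (fun t => -t)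

/-- Max-plus matrix product. -/
def mpMulM {l m n : ℕ} (A : Fin l → Fin m → MP) (B : Fin m → Fin n → MP) :
    Fin l → Fin n → MP := fun i j => Finset.univ.sup fun k => A i k + B k j

/-- Max-plus matrix-vector product. -/
def mpMulV {m n : ℕ} (A : Fin m → Fin n → MP) (x : Fin n → MP) : Fin m → MP :=
  fun i => Finset.univ.sup fun j => A i j + x j

/-- Max-plus identity matrix. -/
def mpId {n : ℕ} : Fin n → Fin n → MP := fun i j => if i = j then ((0:ℝ) : MP) else ⊥

/-- Max-plus matrix power. -/
def mpPow {n : ℕ} (A : Fin n → Fin n → MP) : ℕ → (Fin n → Fin n → MP)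
  | 0 => mpId
  | k+1 => mpMulM (mpPow A k) A

/-- Max-plus trace. -/
def mpTr {n : ℕ} (A : Fin n → Fin n → MP) : MP := Finset.univ.sup fun i => A i i

/-- Tr(A) = tr A ⊕ tr A² ⊕ ⋯ ⊕ tr Aⁿ. -/
def mpTR {n : ℕ} (A : Fin n → Fin n → MP) : MP :=
  (Finset.Icc 1 n).sup fun m => mpTr (mpPow A m)

/-- Kleene star A* = I ⊕ A ⊕ ⋯ ⊕ A^{n-1}. -/
def mpStar {n : ℕ} (A : Fin n → Fin n → MP) : Fin n → Fin n → MP :=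
  fun i j => (Finset.range n).sup fun k => mpPow A k i j

/-- Max-plus spectral radius λ = max_{1≤m≤n} tr(A^m)^{1/m}. -/
def mpLam {n : ℕ} (A : Fin n → Fin n → MP) : MP :=
  (Finset.Icc 1 n).sup fun m => (mpTr (mpPow A m)).map (fun t => t / (m : ℝ))

/-- The alternating product B^{i₀} A B^{i₁} A ⋯ A B^{iₖ}. -/
def mpChain {n : ℕ} (A B : Fin n → Fin n → MP) : (k : ℕ) → (Fin (k+1) → ℕ) → (Fin n → Fin n → MP)
  | 0, i => mpPow B (i 0)
  | (k+1), i => mpMulM (mpChain A B k (fun j => i j.castSucc)) (mpMulM A (mpPow B (i (Fin.last (k+1)))))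

lemma mp_sup_add {ι : Type*} (s : Finset ι) (f : ι → MP) (c : MP) :
    s.sup f + c = s.sup fun i => f i + c :=
  Finset.apply_sup_eq_sup_comp (· + c) (fun x y => (max_add_add_right x y c).symm)
    (WithBot.bot_add c)

lemma mp_add_sup {ι : Type*} (s : Finset ι) (f : ι → MP) (c : MP) :
    c + s.sup f = s.sup fun i => c + f i := by
  simp only [add_comm c, mp_sup_add]

lemma mpMulM_assoc {l m n o : ℕ} (P : Fin l → Fin m → MP) (Q : Fin m → Fin n → MP)
    (R : Fin n → Fin o → MP) : mpMulM (mpMulM P Q) R = mpMulM P (mpMulM Q R) := by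
  funext i j
  simp only [mpMulM, mp_sup_add, mp_add_sup, add_assoc]
  exact Finset.sup_comm _ _ _

lemma mpMulV_mpMulM {l m n : ℕ} (P : Fin l → Fin m → MP) (Q : Fin m → Fin n → MP)
    (v : Fin n → MP) : mpMulV (mpMulM P Q) v = mpMulV P (mpMulV Q v) := by
  funext i
  simp only [mpMulV, mpMulM, mp_sup_add, mp_add_sup, add_assoc]
  exact Finset.sup_comm _ _ _

lemma mpMulV_mono_left {m n : ℕ} {A B : Fin m → Fin n → MP} (h : A ≤ B) (v : Fin n → MP) :
    mpMulV A v ≤ mpMulV B v :=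
  fun i => Finset.sup_mono_fun fun j _ => add_le_add_left (h i j) _

lemma mpMulV_mono_right {m n : ℕ} (A : Fin m → Fin n → MP) {v w : Fin n → MP}
    (h : v ≤ w) :
    mpMulV A v ≤ mpMulV A w :=
  fun _ => Finset.sup_mono_fun fun j _ => add_le_add_right (h j) _

lemma mpId_comm {n : ℕ} (i j : Fin n) : mpId i j = mpId j i := by
  simp only [mpId, eq_comm]

lemma sup_mpId_add {n : ℕ} (i : Fin n) (f : Fin n → MP) :
    Finset.univ.sup (fun k => mpId i k + f k) = f i := by
  refine le_antisymm (Finset.sup_le fun k _ => ?_)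
    (Finset.le_sup_of_le (Finset.mem_univ i) (by simp [mpId]))
  by_cases h : i = k
  · subst h; simp [mpId]
  · simp [mpId, h]

lemma mpMulV_mpId {n : ℕ} (v : Fin n → MP) : mpMulV mpId v = v :=
  funext fun i => sup_mpId_add i v

lemma mpMulM_mpId_left {m n : ℕ} (A : Fin m → Fin n → MP) : mpMulM mpId A = A :=
  funext fun i => funext fun j => sup_mpId_add i (A · j)

lemma mpMulM_mpId_right {m n : ℕ} (A : Fin m → Fin n → MP) : mpMulM A mpId = A := by
  funext i j
  simp only [mpMulM, add_comm (A i _), mpId_comm _ j]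
  exact sup_mpId_add j (A i)

section Powers

variable {n : ℕ} (A : Fin n → Fin n → MP)

lemma mpPow_one : mpPow A 1 = A :=
  mpMulM_mpId_left A

lemma mpPow_add (k l : ℕ) : mpPow A (k + l) = mpMulM (mpPow A k) (mpPow A l) := by
  induction l with
  | zero => exact (mpMulM_mpId_right _).symm
  | succ l ih =>
    show mpMulM (mpPow A (k + l)) A = mpMulM (mpPow A k) (mpMulM (mpPow A l) A)
    rw [ih, mpMulM_assoc]

lemma mpPow_succ' (N : ℕ) : mpPow A (N + 1) = mpMulM A (mpPow A N) := by
  rw [add_comm, mpPow_add, mpPow_one]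

lemma mpPow_add_le (k l : ℕ) (i r j : Fin n) :
    mpPow A k i r + mpPow A l r j ≤ mpPow A (k + l) i j := by
  rw [mpPow_add]
  exact Finset.le_sup (f := fun r => mpPow A k i r + mpPow A l r j) (Finset.mem_univ r)

end Powers

section Walks

variable {n : ℕ} (A : Fin n → Fin n → MP)

def walkWeight (p : ℕ → Fin n) (N : ℕ) : MP :=
  ∑ t ∈ Finset.range N, A (p t) (p (t + 1))

lemma walkWeight_add (p : ℕ → Fin n) (k l : ℕ) :
    walkWeight A p (k + l) = walkWeight A p k + walkWeight A (fun t => p (k + t)) l :=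
  Finset.sum_range_add _ k l

lemma walkWeight_le_mpPow (p : ℕ → Fin n) (N : ℕ) :
    walkWeight A p N ≤ mpPow A N (p 0) (p N) := by
  induction N with
  | zero => simp [walkWeight, mpPow, mpId]
  | succ N ih =>
    calc walkWeight A p (N + 1) = walkWeight A p N + A (p N) (p (N + 1)) :=
          Finset.sum_range_succ _ _
      _ ≤ mpPow A N (p 0) (p N) + mpPow A 1 (p N) (p (N + 1)) := by
          rw [mpPow_one]; exact add_le_add_left ih _
      _ ≤ mpPow A (N + 1) (p 0) (p (N + 1)) := mpPow_add_le A N 1 _ _ _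

lemma exists_walk_of_mpPow_ne_bot (N : ℕ) {i j : Fin n} (h : mpPow A N i j ≠ ⊥) :
    ∃ p : ℕ → Fin n, p 0 = i ∧ p N = j ∧ mpPow A N i j ≤ walkWeight A p N := by
  induction N generalizing i with
  | zero =>
    have hij : i = j := by
      by_contra hij
      exact h (if_neg hij)
    exact ⟨fun _ => i, rfl, hij, by simp [mpPow, mpId, walkWeight, hij]⟩
  | succ N ih =>
    obtain ⟨l, -, hl⟩ := Finset.exists_mem_eq_sup Finset.univ ⟨i, Finset.mem_univ i⟩
      (fun l => A i l + mpPow A N l j)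
    rw [mpPow_succ', mpMulM, hl] at h ⊢
    obtain ⟨p, rfl, hpN, hp⟩ := ih (WithBot.add_ne_bot.1 h).2
    refine ⟨fun | 0 => i | t + 1 => p t, rfl, hpN, ?_⟩
    rw [walkWeight, Finset.sum_range_succ', add_comm]
    exact add_le_add_left hp _

end Walks

lemma exists_pos_add_le_apply_add_eq {n : ℕ} (p : ℕ → Fin n) :
    ∃ a L, 0 < L ∧ a + L ≤ n ∧ p (a + L) = p a := by
  obtain ⟨s, t, hst, hp⟩ :=
    Fintype.exists_ne_map_eq_of_card_lt (fun t : Fin (n + 1) => p t) (by simp)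
  rcases lt_or_gt_of_ne (Fin.val_ne_of_ne hst) with h | h
  · exact ⟨s, t - s, by omega, by omega, by rw [Nat.add_sub_cancel' h.le]; exact hp.symm⟩
  · exact ⟨t, s - t, by omega, by omega, by rw [Nat.add_sub_cancel' h.le]; exact hp⟩

section Star

variable {n : ℕ} (A : Fin n → Fin n → MP)

lemma mpPow_le_mpStar (hA : mpTR A ≤ 0) (N : ℕ) (i j : Fin n) :
    mpPow A N i j ≤ mpStar A i j := by
  induction N using Nat.strong_induction_on generalizing i j with
  | _ N ih =>
  by_cases hN : N < n
  · exact Finset.le_sup (f := fun k => mpPow A k i j) (Finset.mem_range.2 hN)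
  by_cases hbot : mpPow A N i j = ⊥
  · simp [hbot]
  obtain ⟨p, rfl, rfl, hp⟩ := exists_walk_of_mpPow_ne_bot A N hbot
  -- cut out a cycle p a → ⋯ → p (a + L), whose weight is at most Tr(A) ≤ 0
  obtain ⟨a, L, hL, haL, hcyc⟩ := exists_pos_add_le_apply_add_eq p
  obtain ⟨M, rfl⟩ : ∃ M, N = a + L + M := ⟨N - (a + L), by omega⟩
  have hloop : mpPow A L (p a) (p a) ≤ 0 := calc
    _ ≤ mpTr (mpPow A L) := Finset.le_sup (f := fun i => mpPow A L i i) (Finset.mem_univ _)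
    _ ≤ mpTR A :=
      Finset.le_sup (f := fun m => mpTr (mpPow A m)) (Finset.mem_Icc.2 ⟨hL, by omega⟩)
    _ ≤ 0 := hA
  have hbefore := walkWeight_le_mpPow A p a
  have hcycle := walkWeight_le_mpPow A (fun t => p (a + t)) L
  have hafter := walkWeight_le_mpPow A (fun t => p (a + L + t)) M
  simp only [add_zero, hcyc] at hcycle hafter
  calc mpPow A (a + L + M) (p 0) (p (a + L + M))
      ≤ walkWeight A p (a + L + M) := hp
    _ = walkWeight A p a + walkWeight A (fun t => p (a + t)) L
          + walkWeight A (fun t => p (a + L + t)) M := by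
        rw [walkWeight_add, walkWeight_add]
    _ ≤ mpPow A a (p 0) (p a) + 0 + mpPow A M (p a) (p (a + L + M)) := by
        gcongr
        exact hcycle.trans hloop
    _ ≤ mpPow A (a + M) (p 0) (p (a + L + M)) := by
        rw [add_zero]; exact mpPow_add_le A a M _ _ _
    _ ≤ mpStar A (p 0) (p (a + L + M)) := ih _ (by omega) _ _

lemma mpMulM_mpStar_le (hA : mpTR A ≤ 0) : mpMulM A (mpStar A) ≤ mpStar A := by
  intro i j
  refine Finset.sup_le fun k _ => ?_
  rw [mpStar, mp_add_sup]
  refine Finset.sup_le fun c _ => ?_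
  calc A i k + mpPow A c k j = mpPow A 1 i k + mpPow A c k j := by rw [mpPow_one]
    _ ≤ mpPow A (1 + c) i j := mpPow_add_le A 1 c i k j
    _ ≤ mpStar A i j := mpPow_le_mpStar A hA _ i j

lemma zero_le_mpStar_self (i : Fin n) : 0 ≤ mpStar A i i :=
  Finset.le_sup_of_le (f := fun k => mpPow A k i i) (Finset.mem_range.2 (Fin.pos i))
    (by simp [mpPow, mpId])

lemma le_mpMulV_mpStar (v : Fin n → MP) : v ≤ mpMulV (mpStar A) v := fun i =>
  calc v i = 0 + v i := (zero_add _).symm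
    _ ≤ mpStar A i i + v i := add_le_add_left (zero_le_mpStar_self A i) _
    _ ≤ mpMulV (mpStar A) v i :=
      Finset.le_sup (f := fun j => mpStar A i j + v j) (Finset.mem_univ i)

lemma le_mpMulM_mpStar {m : ℕ} (C : Fin m → Fin n → MP) : C ≤ mpMulM C (mpStar A) :=
  fun i j => calc
    C i j = C i j + 0 := (add_zero _).symm
    _ ≤ C i j + mpStar A j j := add_le_add_right (zero_le_mpStar_self A j) _
    _ ≤ mpMulM C (mpStar A) i j :=
      Finset.le_sup (f := fun k => C i k + mpStar A k j) (Finset.mem_univ j)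

lemma mpMulV_mpStar_apply (v : Fin n → MP) (i : Fin n) :
    mpMulV (mpStar A) v i = (Finset.range n).sup fun k => mpMulV (mpPow A k) v i := by
  simp only [mpMulV, mpStar, mp_sup_add]
  exact Finset.sup_comm _ _ _

lemma mpMulV_mpPow_le {x : Fin n → MP} (hx : mpMulV A x ≤ x) (k : ℕ) :
    mpMulV (mpPow A k) x ≤ x := by
  induction k with
  | zero => exact (mpMulV_mpId x).le
  | succ k ih =>
    calc mpMulV (mpPow A (k + 1)) x = mpMulV (mpPow A k) (mpMulV A x) :=
          mpMulV_mpMulM _ _ _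
      _ ≤ mpMulV (mpPow A k) x := mpMulV_mono_right _ hx
      _ ≤ x := ih

lemma mpMulV_mpStar_eq_self {x : Fin n → MP} (hx : mpMulV A x ≤ x) :
    mpMulV (mpStar A) x = x :=
  le_antisymm (fun i => (mpMulV_mpStar_apply A x i).trans_le
      (Finset.sup_le fun k _ => mpMulV_mpPow_le A hx k i))
    (le_mpMulV_mpStar A x)

end Star

lemma le_mpInv_iff_add_le_zero {s : MP} (hs : s ≠ ⊥) (y : MP) :
    y ≤ mpInv s ↔ s + y ≤ 0 := by
  lift s to ℝ using hs
  induction y using WithBot.recBotCoe with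
  | bot => simp
  | coe y =>
    rw [mpInv, WithBot.map_coe, ← WithBot.coe_add, ← WithBot.coe_zero, WithBot.coe_le_coe,
      WithBot.coe_le_coe]
    constructor <;> intro <;> linarith

lemma coe_neg_add_le_zero_iff (r : ℝ) (a : MP) : ((-r : ℝ) : MP) + a ≤ 0 ↔ a ≤ r := by
  induction a using WithBot.recBotCoe with
  | bot => simp
  | coe a =>
    rw [← WithBot.coe_add, ← WithBot.coe_zero, WithBot.coe_le_coe, WithBot.coe_le_coe]
    constructor <;> intro <;> linarith

lemma mpMulV_le_iff_le_mpInv {m n : ℕ} (M : Fin m → Fin n → MP)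
    (hM : ∀ j, ∃ i, M i j ≠ ⊥) (d : Fin m → ℝ) (y : Fin n → MP) :
    (∀ i, mpMulV M y i ≤ d i) ↔
      ∀ j, y j ≤ mpInv (Finset.univ.sup fun i => ((-(d i) : ℝ) : MP) + M i j) := by
  have hS : ∀ j, (Finset.univ.sup fun i => ((-(d i) : ℝ) : MP) + M i j) ≠ ⊥ := fun j => by
    obtain ⟨i, hi⟩ := hM j
    exact ne_bot_of_le_ne_bot (WithBot.add_ne_bot.2 ⟨WithBot.coe_ne_bot, hi⟩)
      (Finset.le_sup (f := fun i => ((-(d i) : ℝ) : MP) + M i j) (Finset.mem_univ i))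
  simp only [le_mpInv_iff_add_le_zero (hS _), mp_sup_add, Finset.sup_le_iff, Finset.mem_univ,
    true_implies, mpMulV, add_assoc, coe_neg_add_le_zero_iff]
  exact forall_comm

/-- If Δ = Tr(A) ⊕ d⁻ C A* b ≤ 𝟙, the regular solutions of the system
A ⊗ x ⊕ b ≤ x, C ⊗ x ≤ d are exactly x = A* ⊗ u with b ≤ u ≤ (d⁻ C A*)⁻. -/
theorem maxplus_system_solutions {m n : ℕ} (A : Fin n → Fin n → MP)
    (C : Fin m → Fin n → MP) (hC : ∀ j, ∃ i, C i j ≠ ⊥)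
    (b : Fin n → MP) (d : Fin m → ℝ)
    (hΔ : max (mpTR A)
        (Finset.univ.sup fun j =>
          (Finset.univ.sup fun i => ((-(d i) : ℝ) : MP) + mpMulM C (mpStar A) i j) + b j)
      ≤ ((0:ℝ) : MP))
    (x : Fin n → MP) :
    ((∀ i, x i ≠ ⊥) ∧ (∀ i, max (mpMulV A x i) (b i) ≤ x i) ∧
      (∀ i, mpMulV C x i ≤ (d i : MP))) ↔
    (∃ u : Fin n → ℝ,
      (∀ j, b j ≤ (u j : MP)) ∧
      (∀ j, (u j : MP) ≤
        mpInv (Finset.univ.sup fun i => ((-(d i) : ℝ) : MP) + mpMulM C (mpStar A) i j)) ∧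
      ∀ i, x i = mpMulV (mpStar A) (fun j => (u j : MP)) i) := by
  have hA : mpTR A ≤ 0 := (le_max_left _ _).trans hΔ
  have hCA : ∀ j, ∃ i, mpMulM C (mpStar A) i j ≠ ⊥ := fun j =>
    (hC j).imp fun i hi => ne_bot_of_le_ne_bot hi (le_mpMulM_mpStar A C i j)
  constructor
  · rintro ⟨hreg, hsol, hCx⟩
    have hfix : mpMulV (mpStar A) x = x :=
      mpMulV_mpStar_eq_self A fun i => (le_max_left _ _).trans (hsol i)
    refine ⟨fun j => (x j).unbot (hreg j), fun j => ?_, ?_, fun i => ?_⟩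
    · simpa using (le_max_right _ _).trans (hsol j)
    · simp only [WithBot.coe_unbot]
      rw [← mpMulV_le_iff_le_mpInv _ hCA, mpMulV_mpMulM, hfix]
      exact hCx
    · simp [hfix]
  · rintro ⟨u, hbu, hu, hx⟩
    obtain rfl : x = mpMulV (mpStar A) (fun j => (u j : MP)) := funext hx
    have hux := le_mpMulV_mpStar A (fun j => (u j : MP))
    refine ⟨fun i => ne_bot_of_le_ne_bot WithBot.coe_ne_bot (hux i),
      fun i => max_le ?_ ((hbu i).trans (hux i)), ?_⟩
    · rw [← mpMulV_mpMulM]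
      exact mpMulV_mono_left (mpMulM_mpStar_le A hA) _ i
    · rw [← mpMulV_mpMulM, mpMulV_le_iff_le_mpInv _ hCA]
      exact hu
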